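/- arXiv:1804.01287 — 2 statements merged into one kernel-verified Lean document; each statement's English description precedes it below -/
import Mathlib

section
/- Let ψ : P → Q be the unique ℂ-algebra homomorphism with ψ(ℓ⁽ⁱ⁾) = D_Q^i((t⁽⁰⁾)²) and ψ(w⁽ⁱ⁾) = D_Q^i((t⁽⁰⁾)³) for all i ≥ 0. Then the kernel of ψ equals the radical of the ideal I generated by {f⁽ⁱ⁾ : i ≥ 0}, where f⁽ⁱ⁾ = Dⁱ((w⁽⁰⁾)² − (ℓ⁽⁰⁾)³). Equivalently, for p ∈ P one has ψ(p) = 0 if and only if pⁿ ∈ I for some n ≥ 1. -/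
open MvPolynomial

noncomputable section

/-- The polynomial ring `P = ℂ[ℓ⁽⁰⁾, ℓ⁽¹⁾, …, w⁽⁰⁾, w⁽¹⁾, …]`:
variables are indexed by `Fin 2 × ℕ`, where `(0, i)` is `ℓ⁽ⁱ⁾` and `(1, i)` is `w⁽ⁱ⁾`. -/
abbrev P : Type := MvPolynomial (Fin 2 × ℕ) ℂ

/-- The unique ℂ-linear derivation `D : P → P` with `D(ℓ⁽ⁱ⁾) = ℓ⁽ⁱ⁺¹⁾`, `D(w⁽ⁱ⁾) = w⁽ⁱ⁺¹⁾`. -/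
def D : Derivation ℂ P P :=
  MvPolynomial.mkDerivation ℂ (fun p : Fin 2 × ℕ => (X (p.1, p.2 + 1) : P))

/-- `ℓ⁽ⁱ⁾` -/
def lv (i : ℕ) : P := X (0, i)

/-- `w⁽ⁱ⁾` -/
def wv (i : ℕ) : P := X (1, i)

/-- The polynomial ring `Q = ℂ[t⁽⁰⁾, t⁽¹⁾, …]`. -/
abbrev Q : Type := MvPolynomial ℕ ℂ

/-- The unique ℂ-linear derivation `D_Q : Q → Q` with `D_Q(t⁽ⁱ⁾) = t⁽ⁱ⁺¹⁾`. -/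
def DQ : Derivation ℂ Q Q :=
  MvPolynomial.mkDerivation ℂ (fun i : ℕ => (X (i + 1) : Q))

/-- `t⁽⁰⁾` -/
def t : Q := X 0

/-- `f⁽ⁱ⁾ = Dⁱ((w⁽⁰⁾)² − (ℓ⁽⁰⁾)³)`. -/
def fd (i : ℕ) : P := (⇑D)^[i] (wv 0 ^ 2 - lv 0 ^ 3)

/-- The ideal `I` generated by all `f⁽ⁱ⁾`, `i ≥ 0`. -/
def I : Ideal P := Ideal.span (Set.range fd)

/-- The ℂ-algebra homomorphism `ψ : P → Q` with `ψ(ℓ⁽ⁱ⁾) = D_Q^i((t⁽⁰⁾)²)` and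
`ψ(w⁽ⁱ⁾) = D_Q^i((t⁽⁰⁾)³)`, induced by the parametrization `t ↦ (t², t³)`
of the cuspidal cubic. -/
def ψ : P →ₐ[ℂ] Q :=
  aeval (fun p : Fin 2 × ℕ => (⇑DQ)^[p.2] (if p.1 = 0 then t ^ 2 else t ^ 3))

/-!
An arc of the cusp `w² = ℓ³` over a field `k` of characteristic zero is a pair of power series
`(L, W)` with `W² = L³`; since `k⟦X⟧` is integrally closed, `U = W / L` is a power series with
`U² = L` and `U³ = W`, so every such arc comes from the arc `U` of the line through `t ↦ (t², t³)`.
Taylor expansion turns each `k`-point of `Spec (P ⧸ I)` into an arc of the cusp, so every prime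
containing `I` contains `ker ψ`. Conversely `ker ψ` is a prime containing `I`.
-/

namespace MvPolynomial

variable {R σ A : Type*} [CommSemiring R] [CommSemiring A] [Algebra R A]

theorem semiconj_derivation_of_X (g : MvPolynomial σ R →ₐ[R] A)
    {D₁ : Derivation R (MvPolynomial σ R) (MvPolynomial σ R)} {D₂ : Derivation R A A}
    (h : ∀ i, g (D₁ (X i)) = D₂ (g (X i))) : Function.Semiconj g D₁ D₂ := by
  intro p
  induction p using MvPolynomial.induction_on with
  | C c => simp [← algebraMap_eq]
  | add p q hp hq => simp only [map_add, hp, hq]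
  | mul_X p i hp => simp only [Derivation.leibniz, smul_eq_mul, map_add, map_mul, hp, h]

end MvPolynomial

namespace PowerSeries

open scoped Nat

theorem eq_zero_of_forall_constantCoeff_iterate_derivative {R : Type*} [CommSemiring R]
    [NoZeroDivisors R] [CharZero R] {f : R⟦X⟧}
    (h : ∀ n, constantCoeff ((d⁄dX R)^[n] f) = 0) : f = 0 := by
  ext n
  simpa [constantCoeff_iterate_derivative, Nat.factorial_ne_zero] using h n

variable {K : Type*} [Field K] [CharZero K]

def taylorSeries (c : ℕ → K) : K⟦X⟧ := mk fun n => (n ! : K)⁻¹ * c n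

theorem constantCoeff_iterate_derivative_taylorSeries (c : ℕ → K) (n : ℕ) :
    constantCoeff ((d⁄dX K)^[n] (taylorSeries c)) = c n := by
  rw [constantCoeff_iterate_derivative, taylorSeries, coeff_mk, ← mul_assoc,
    mul_inv_cancel₀ (Nat.cast_ne_zero.2 n.factorial_ne_zero), one_mul]

end PowerSeries

theorem exists_sq_eq_and_cube_eq_of_sq_eq_cube {R : Type*} [CommRing R] [IsDomain R]
    [IsIntegrallyClosed R] {a b : R} (h : b ^ 2 = a ^ 3) : ∃ u, u ^ 2 = a ∧ u ^ 3 = b := by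
  rcases eq_or_ne a 0 with rfl | ha
  · exact ⟨0, by simp, by simp_all⟩
  have hdvd : a ^ 2 ∣ b ^ 2 := ⟨a, by rw [h]; ring⟩
  obtain ⟨u, rfl⟩ := (IsIntegrallyClosed.pow_dvd_pow_iff two_ne_zero).1 hdvd
  have hu : u ^ 2 = a := mul_left_cancel₀ (pow_ne_zero 2 ha) (by linear_combination h)
  exact ⟨u, hu, by rw [pow_succ, hu, mul_comm]⟩

open PowerSeries

section Arcs

variable {k : Type*} [Field k] [Algebra ℂ k]

/-- The arc `Spec k⟦X⟧ → 𝔸²` whose `n`-th derivatives at `0` are `a (ℓ⁽ⁿ⁾)` and `a (w⁽ⁿ⁾)`,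
as a `k⟦X⟧`-point of the arc space `Spec P`. -/
def taylorArc (a : P →ₐ[ℂ] k) : P →ₐ[ℂ] k⟦X⟧ :=
  aeval fun v => (d⁄dX k)^[v.2] (taylorSeries fun n => a (MvPolynomial.X (v.1, n)))

def lineArc (u : k⟦X⟧) : Q →ₐ[ℂ] k⟦X⟧ :=
  aeval fun i => (d⁄dX k)^[i] u

theorem constantCoeff_taylorArc (a : P →ₐ[ℂ] k) (p : P) :
    constantCoeff (taylorArc a p) = a p := by
  have : CharZero k := charZero_of_injective_algebraMap (algebraMap ℂ k).injective
  suffices (constantCoeff : k⟦X⟧ →+* k).comp (taylorArc a : P →+* k⟦X⟧) = a from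
    RingHom.congr_fun this p
  refine MvPolynomial.ringHom_ext (fun c => ?_) fun v => ?_
  · simp [← MvPolynomial.algebraMap_eq, PowerSeries.algebraMap_apply]
  · simp [taylorArc, constantCoeff_iterate_derivative_taylorSeries]

theorem taylorArc_semiconj (a : P →ₐ[ℂ] k) :
    Function.Semiconj (taylorArc a) D ((d⁄dX k).restrictScalars ℂ) :=
  semiconj_derivation_of_X _ fun v => by
    simp [D, taylorArc, Function.iterate_succ_apply']

theorem lineArc_semiconj (u : k⟦X⟧) :
    Function.Semiconj (lineArc u) DQ ((d⁄dX k).restrictScalars ℂ) :=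
  semiconj_derivation_of_X _ fun i => by
    simp [DQ, lineArc, Function.iterate_succ_apply']

theorem taylorArc_eq_zero {a : P →ₐ[ℂ] k} {p : P} (h : ∀ n, a (D^[n] p) = 0) :
    taylorArc a p = 0 := by
  have : CharZero k := charZero_of_injective_algebraMap (algebraMap ℂ k).injective
  refine eq_zero_of_forall_constantCoeff_iterate_derivative fun n => ?_
  rw [← h n, ← constantCoeff_taylorArc, (taylorArc_semiconj a).iterate_right n p,
    Derivation.coe_restrictScalars]

theorem lineArc_comp_ψ {a : P →ₐ[ℂ] k} {u : k⟦X⟧} (h₂ : u ^ 2 = taylorArc a (lv 0))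
    (h₃ : u ^ 3 = taylorArc a (wv 0)) : (lineArc u).comp ψ = taylorArc a := by
  refine MvPolynomial.algHom_ext fun ⟨j, i⟩ => ?_
  have hX : taylorArc a (X (j, i)) = (d⁄dX k)^[i] (taylorArc a (X (j, 0))) := by
    simp [taylorArc]
  rw [AlgHom.comp_apply, ψ, aeval_X, (lineArc_semiconj u).iterate_right, hX]
  fin_cases j <;> simp [lineArc, t, h₂, h₃, lv, wv, Derivation.coe_restrictScalars]

theorem ker_ψ_le_ker {a : P →ₐ[ℂ] k} (ha : ∀ i, a (fd i) = 0) :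
    RingHom.ker ψ ≤ RingHom.ker a := by
  have hcusp : taylorArc a (wv 0) ^ 2 = taylorArc a (lv 0) ^ 3 := by
    rw [← sub_eq_zero, ← map_pow, ← map_pow, ← map_sub]
    exact taylorArc_eq_zero ha
  obtain ⟨u, hu₂, hu₃⟩ := exists_sq_eq_and_cube_eq_of_sq_eq_cube hcusp
  intro p hp
  rw [RingHom.mem_ker] at hp ⊢
  rw [← constantCoeff_taylorArc, ← lineArc_comp_ψ hu₂ hu₃, AlgHom.comp_apply, hp, map_zero,
    map_zero]

end Arcs

theorem ψ_semiconj : Function.Semiconj ψ D DQ :=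
  semiconj_derivation_of_X _ fun v => by
    simp [D, ψ, Function.iterate_succ_apply']

theorem I_le_ker_ψ : I ≤ RingHom.ker ψ := by
  refine Ideal.span_le.2 (Set.range_subset_iff.2 fun i => ?_)
  rw [SetLike.mem_coe, RingHom.mem_ker, fd, ψ_semiconj.iterate_right]
  have hcusp : ψ (wv 0 ^ 2 - lv 0 ^ 3) = 0 := calc
    ψ (wv 0 ^ 2 - lv 0 ^ 3) = (t ^ 3) ^ 2 - (t ^ 2) ^ 3 := by simp [ψ, wv, lv]
    _ = 0 := by ring
  rw [hcusp, Function.iterate_fixed (map_zero _)]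

theorem ker_ψ_eq_radical :
    RingHom.ker ψ = I.radical ∧ ∀ p : P, ψ p = 0 ↔ ∃ n : ℕ, 1 ≤ n ∧ p ^ n ∈ I := by
  have hker : RingHom.ker ψ = I.radical := by
    refine le_antisymm ?_ ((RingHom.ker_isPrime ψ).radical_le_iff.2 I_le_ker_ψ)
    rw [Ideal.radical_eq_sInf]
    refine le_sInf fun 𝔭 ⟨hI𝔭, h𝔭⟩ => ?_
    have hfd (i : ℕ) : algebraMap P 𝔭.ResidueField (fd i) = 0 :=
      Ideal.algebraMap_residueField_eq_zero.2 (hI𝔭 (Ideal.subset_span ⟨i, rfl⟩))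
    exact fun p hp => Ideal.algebraMap_residueField_eq_zero.1
      (ker_ψ_le_ker (a := IsScalarTower.toAlgHom ℂ P 𝔭.ResidueField) hfd hp)
  refine ⟨hker, fun p => ?_⟩
  rw [← RingHom.mem_ker, hker, Ideal.mem_radical_iff]
  exact ⟨fun ⟨n, hn⟩ => ⟨n + 1, by omega, I.pow_mem_of_pow_mem hn n.le_succ⟩,
    fun ⟨n, _, hn⟩ => ⟨n, hn⟩⟩
end
end

section
/- Let I₅ ⊆ P be the ideal generated by {Dⁱ(g) : i ≥ 0} where g = (w⁽⁰⁾)² − (ℓ⁽⁰⁾)⁵. Let r = 2ℓ⁽⁰⁾w⁽¹⁾ − 5ℓ⁽¹⁾w⁽⁰⁾ ∈ P. Then r³ ∈ I₅. -/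
open MvPolynomial

noncomputable section

/-- `g = (w⁽⁰⁾)² − (ℓ⁽⁰⁾)⁵`. -/
def g : P := wv 0 ^ 2 - lv 0 ^ 5

/-- The ideal `I₅` generated by all `Dⁱ(g)`, `i ≥ 0`. -/
def I₅ : Ideal P := Ideal.span (Set.range fun i : ℕ => (⇑D)^[i] g)

/-- `r = 2ℓ⁽⁰⁾w⁽¹⁾ − 5ℓ⁽¹⁾w⁽⁰⁾`. -/
def r : P := 2 * lv 0 * wv 1 - 5 * lv 1 * wv 0

lemma D_lv (i : ℕ) : D (lv i) = lv (i + 1) := by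
  simp [D, lv, mkDerivation_X]

lemma D_wv (i : ℕ) : D (wv i) = wv (i + 1) := by
  simp [D, wv, mkDerivation_X]

lemma hDg : D g = 2 * wv 0 * wv 1 - 5 * lv 0 ^ 4 * lv 1 := by
  have h1 : D (wv 0 ^ 2) = 2 * wv 0 * wv 1 := by
    rw [show (wv 0 : P) ^ 2 = wv 0 * wv 0 by ring, Derivation.leibniz, D_wv]
    simp [smul_eq_mul]; ring
  have h2 : D (lv 0 ^ 5) = 5 * lv 0 ^ 4 * lv 1 := by
    rw [show (lv 0 : P) ^ 5 = lv 0 * (lv 0 * (lv 0 * (lv 0 * lv 0))) by ring]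
    simp only [Derivation.leibniz, D_lv, smul_eq_mul]
    ring
  rw [g, map_sub, h1, h2]

lemma hDDg : D (D g) =
    2 * wv 1 ^ 2 + 2 * wv 0 * wv 2 - 20 * lv 0 ^ 3 * lv 1 ^ 2 - 5 * lv 0 ^ 4 * lv 2 := by
  rw [hDg]
  have h1 : D (2 * wv 0 * wv 1 : P) = 2 * wv 1 ^ 2 + 2 * wv 0 * wv 2 := by
    have h2 : D ((2 : ℕ) : P) = 0 := D.map_natCast 2
    simp only [Derivation.leibniz, D_wv, smul_eq_mul, map_ofNat]
    simp only [show ((2 : P)) = ((2 : ℕ) : P) by norm_num, h2]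
    push_cast
    ring
  have h2 : D (5 * lv 0 ^ 4 * lv 1 : P) = 20 * lv 0 ^ 3 * lv 1 ^ 2 + 5 * lv 0 ^ 4 * lv 2 := by
    have hp : D (lv 0 ^ 4 : P) = 4 * lv 0 ^ 3 * lv 1 := by
      rw [show (lv 0 : P) ^ 4 = lv 0 * (lv 0 * (lv 0 * lv 0)) by ring]
      simp only [Derivation.leibniz, D_lv, smul_eq_mul]; ring
    have h5' : D ((5 : ℕ) : P) = 0 := D.map_natCast 5
    simp only [Derivation.leibniz, D_lv, smul_eq_mul, map_ofNat, hp]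
    simp only [show ((5 : P)) = ((5 : ℕ) : P) by norm_num, h5']
    push_cast
    ring
  rw [map_sub, h1, h2]; ring

theorem r_cubed_mem_I₅ : r ^ 3 ∈ I₅ := by
  have hg0 : g ∈ I₅ := Ideal.subset_span ⟨0, rfl⟩
  have hg1 : D g ∈ I₅ := Ideal.subset_span ⟨1, rfl⟩
  have hg2 : D (D g) ∈ I₅ := Ideal.subset_span ⟨2, by simp [Function.iterate_succ']⟩
  have key : r ^ 3 =
      (-125 * lv 1 ^ 3 * wv 0 + 20 * lv 0 * lv 1 ^ 2 * wv 1
        - 20 * lv 0 ^ 2 * lv 2 * wv 1 + 20 * lv 0 ^ 2 * lv 1 * wv 2) * g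
      + (65 * lv 0 * lv 1 ^ 2 * wv 0 + 10 * lv 0 ^ 2 * lv 2 * wv 0
        - 20 * lv 0 ^ 2 * lv 1 * wv 1 - 4 * lv 0 ^ 3 * wv 2) * D g
      + (-10 * lv 0 ^ 2 * lv 1 * wv 0 + 4 * lv 0 ^ 3 * wv 1) * D (D g) := by
    rw [hDDg, hDg, r, g]; ring
  rw [key]
  exact Ideal.add_mem _ (Ideal.add_mem _ (Ideal.mul_mem_left _ _ hg0)
    (Ideal.mul_mem_left _ _ hg1)) (Ideal.mul_mem_left _ _ hg2)
end
end
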